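/- Let (E,C) be an adaptable separated graph, let F be the free commutative monoid on E⁰, and let → be the rewriting relation on F∖{0}. If v ∈ E⁰ is a vertex with [v] ∈ I_free, δ ∈ F, and v + δ → λ in F, then v belongs to the support of λ (i.e., v appears with positive coefficient in the canonical expression of λ). -/

import Mathlib

/-- A (finitely) separated graph `(E,C)`: a directed graph together with,
for each vertex `v`, a partition `C v` of `s⁻¹(v)` into pairwise disjoint
nonempty finite subsets. -/
structure SepGraph where
  V : Type
  Ed : Type
  s : Ed → V
  r : Ed → V
  C : V → Set (Finset Ed)
  c_src : ∀ v : V, ∀ X ∈ C v, ∀ e ∈ X, s e = v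
  c_nonempty : ∀ v : V, ∀ X ∈ C v, X.Nonempty
  c_disjoint : ∀ v : V, ∀ X ∈ C v, ∀ Y ∈ C v, X ≠ Y → Disjoint X Y
  c_cover : ∀ e : Ed, ∃ X ∈ C (s e), e ∈ X

namespace SepGraph

variable (G : SepGraph)

/-- There is an edge from `v` to `w`. -/
def Edge (v w : G.V) : Prop := ∃ e : G.Ed, G.s e = v ∧ G.r e = w

/-- There is a directed path from `v` to `w`. -/
def Reach : G.V → G.V → Prop := Relation.ReflTransGen G.Edge

/-- Mutual reachability: `v` and `w` lie in the same component, i.e. `[v] = [w]`. -/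
def VEquiv (v w : G.V) : Prop := G.Reach v w ∧ G.Reach w v

/-- `[v] ≤ [w]` in the antisymmetrization poset `I` of `E⁰`. -/
def VLe (v w : G.V) : Prop := G.Reach w v

/-- `[v] < [w]` in the antisymmetrization poset `I` of `E⁰`. -/
def VLt (v w : G.V) : Prop := G.Reach w v ∧ ¬ G.Reach v w

/-- The free commutative monoid `F` on the vertex set `E⁰`. -/
abbrev FreeM := G.V →₀ ℕ

/-- The basis element of `F` corresponding to a vertex. -/
noncomputable def vert (v : G.V) : G.FreeM := Finsupp.single v 1

/-- `r(X) = Σ_{e ∈ X} r(e)` as an element of `F`. -/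
noncomputable def rX (X : Finset G.Ed) : G.FreeM := ∑ e ∈ X, Finsupp.single (G.r e) 1

/-- The defining relations of `M(E,C)`: `a_v = Σ_{e ∈ X} a_{r(e)}` for `X ∈ C_v`. -/
def Rel : G.FreeM → G.FreeM → Prop := fun a b =>
  ∃ v : G.V, ∃ X ∈ G.C v, a = G.vert v ∧ b = G.rX X

/-- The congruence on `F` generated by the defining relations. -/
noncomputable def mCon : AddCon G.FreeM := addConGen G.Rel

/-- The monoid `M(E,C)` of the separated graph `(E,C)`. -/
def M := G.mCon.Quotient

noncomputable instance : AddCommMonoid G.M := inferInstanceAs (AddCommMonoid G.mCon.Quotient)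

/-- The generator `a_v` of `M(E,C)`. -/
noncomputable def gen (v : G.V) : G.M := G.mCon.mk' (G.vert v)

end SepGraph

/-- The data witnessing that a separated graph is *adaptable*: the
antisymmetrization `I` of `E⁰` is finite, it is partitioned into free and
regular elements (with free components reduced to a single vertex `v^p`),
and the conditions of Definition 1.6 of the paper hold.  Here, for
`p ∈ I_reg`, the subgraph `E_p` is the restriction of `E` to the class `p`. -/
structure SepGraph.AdaptableStructure (G : SepGraph) where
  /-- the partition `I = I_free ⊔ I_reg` (a vertex is free if its class is free) -/
  free : G.V → Prop
  /-- `I` is a finite poset -/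
  finite_components : Finite (Quot G.VEquiv)
  free_respects : ∀ v w : G.V, G.VEquiv v w → (free v ↔ free w)
  /-- a free component consists of a single vertex `E_p⁰ = {v^p}` -/
  free_singleton : ∀ v : G.V, free v → ∀ w : G.V, G.VEquiv w v → w = v
  /-- for free `p`, `s⁻¹(v^p) = ∅` iff `p` is minimal in `I` -/
  free_minimal : ∀ v : G.V, free v →
    ((¬ ∃ e : G.Ed, G.s e = v) ↔ ∀ w : G.V, G.Reach v w → G.VEquiv v w)
  /-- for free non-minimal `p`, `C_{v^p} = {X₁,…,X_{k(p)}}` is a finite family -/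
  free_C_finite : ∀ v : G.V, free v → (G.C v).Finite
  /-- each `X_i ∈ C_{v^p}` contains exactly one loop `α(p,i)` at `v^p` -/
  free_loop : ∀ v : G.V, free v → ∀ X ∈ G.C v, ∃! e : G.Ed, e ∈ X ∧ G.r e = v
  /-- the remaining edges `β(p,i,t)` of `X_i` end in strictly smaller components -/
  free_targets : ∀ v : G.V, free v → ∀ X ∈ G.C v, ∀ e ∈ X, G.r e = v ∨ G.VLt (G.r e) v
  /-- `g(p,i) ≥ 1`: there is at least one connector `β(p,i,1)` in each `X_i` -/
  free_beta : ∀ v : G.V, free v → ∀ X ∈ G.C v, ∃ e ∈ X, G.r e ≠ v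
  /-- for regular `p` and `w ∈ E_p⁰`, `|C_w| = 1` -/
  reg_unique_C : ∀ w : G.V, ¬ free w → ∃! X : Finset G.Ed, X ∈ G.C w
  /-- for regular `p` and `w ∈ E_p⁰`, `|s_{E_p}⁻¹(w)| ≥ 2` -/
  reg_two_edges : ∀ w : G.V, ¬ free w → ∃ e₁ e₂ : G.Ed, e₁ ≠ e₂ ∧ G.s e₁ = w ∧ G.s e₂ = w ∧
    G.VEquiv (G.r e₁) w ∧ G.VEquiv (G.r e₂) w
  /-- every edge leaving `w ∈ E_p⁰` stays in `E_p` or goes to some `E_q⁰` with `q < p` -/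
  reg_targets : ∀ w : G.V, ¬ free w → ∀ e : G.Ed, G.s e = w →
    G.VEquiv (G.r e) w ∨ G.VLt (G.r e) w

namespace SepGraph

variable (G : SepGraph)

/-- One step `→₁` of the rewriting relation on `F∖{0}`: replace one occurrence of a
vertex `v` of the support by `r(X)`, for some `X ∈ C_v`. -/
def Step : G.FreeM → G.FreeM → Prop := fun a b =>
  ∃ (v : G.V) (X : Finset G.Ed) (a' : G.FreeM),
    X ∈ G.C v ∧ a = G.vert v + a' ∧ b = a' + G.rX X

/-- The rewriting relation `→`: the reflexive and transitive closure of `→₁`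
(in particular `0 → 0`). -/
def Rw : G.FreeM → G.FreeM → Prop := Relation.ReflTransGen G.Step

end SepGraph

/-! A step `w ↦ r(X)` can lower the coefficient of `v` only when `w = v`, and every `X ∈ C_v`
of a free vertex `v` contains a loop `α` at `v`, so `r(X)` puts `v` back. -/

namespace SepGraph

variable {G : SepGraph}

theorem rX_apply_r_pos {X : Finset G.Ed} {e : G.Ed} (he : e ∈ X) : 0 < G.rX X (G.r e) := by
  classical
  rw [rX, Finsupp.finsetSum_apply]
  calc 0 < Finsupp.single (G.r e) 1 (G.r e) := by simp
    _ ≤ ∑ e' ∈ X, Finsupp.single (G.r e') 1 (G.r e) :=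
      Finset.single_le_sum (f := fun e' => Finsupp.single (G.r e') 1 (G.r e))
        (fun _ _ => Nat.zero_le _) he

theorem Step.apply_pos {v : G.V} (hloop : ∀ X ∈ G.C v, ∃ e ∈ X, G.r e = v) {a b : G.FreeM}
    (hab : G.Step a b) (ha : 0 < a v) : 0 < b v := by
  obtain ⟨w, X, a', hX, rfl, rfl⟩ := hab
  rw [Finsupp.add_apply] at ha ⊢
  by_cases hw : w = v
  · subst hw
    obtain ⟨e, he, hre⟩ := hloop X hX
    have hX_pos : 0 < G.rX X w := hre ▸ rX_apply_r_pos he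
    omega
  · have hw_zero : G.vert w v = 0 := Finsupp.single_eq_of_ne' hw
    omega

theorem Rw.mem_support {v : G.V} (hloop : ∀ X ∈ G.C v, ∃ e ∈ X, G.r e = v) {a b : G.FreeM}
    (hab : G.Rw a b) (ha : v ∈ a.support) : v ∈ b.support := by
  simp only [Finsupp.mem_support_iff, ← Nat.pos_iff_ne_zero] at ha ⊢
  induction hab with
  | refl => exact ha
  | tail _ hstep ih => exact hstep.apply_pos hloop ih

theorem AdaptableStructure.exists_loop (A : G.AdaptableStructure) {v : G.V} (hv : A.free v)
    {X : Finset G.Ed} (hX : X ∈ G.C v) : ∃ e ∈ X, G.r e = v :=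
  (A.free_loop v hv X hX).exists.imp fun _ he => he

end SepGraph

/-- Let `(E,C)` be an adaptable separated graph.  If `[v] ∈ I_free`
and `v + δ → λ` in `F`, then `v` belongs to the support of `λ`. -/
theorem stmt6 (G : SepGraph) (A : G.AdaptableStructure) (v : G.V) (hv : A.free v)
    (δ lam : G.FreeM) (h : G.Rw (G.vert v + δ) lam) :
    v ∈ lam.support := by
  refine h.mem_support (fun X hX => A.exists_loop hv hX) ?_
  simp [SepGraph.vert]
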